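/- Let X be a mean-zero strictly subgaussian random variable with variance σ_X² (E[exp(sX)] ≤ exp(s²σ_X²/2) for all s). Then for every t with 0 < t < 1/(2σ_X²), E[exp(t(X² − σ_X²))] ≤ exp(σ_X⁴t²/(1 − 2σ_X²t)). -/

import Mathlib

/-!
Hubbard–Stratonovich: `exp (t x²) · √(4πt) = ∫ exp (s x - s² / (4t)) ds`. Averaging over `X` and
swapping the integrals (Tonelli) turns `E[exp (t X²)]` into a Gaussian average of the moment
generating function of `X`; bounding it by `exp (s² σ² / 2)` leaves a Gaussian integral equal to
`(1 - 2σ²t)^(-1/2)`. Centring costs the factor `exp (-σ²t)`, and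
`-log (1 - u) - u ≤ u² / (2 (1 - u))` with `u = 2σ²t` gives the claimed bound.
-/

open MeasureTheory ProbabilityTheory Real

section HubbardStratonovich

variable {t : ℝ}

lemma mul_sub_sq_div_eq (ht : t ≠ 0) (x s : ℝ) :
    s * x - s ^ 2 / (4 * t) = t * x ^ 2 + -(1 / (4 * t)) * (s - 2 * t * x) ^ 2 := by
  field_simp
  ring

lemma mul_le_sq_div_add_mul_sq (ht : 0 < t) (x s : ℝ) : s * x ≤ s ^ 2 / (4 * t) + t * x ^ 2 := by
  have := mul_sub_sq_div_eq ht.ne' x s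
  have : 0 ≤ 1 / (4 * t) * (s - 2 * t * x) ^ 2 := by positivity
  linarith

lemma integrable_exp_mul_sub_sq_div (ht : 0 < t) (x : ℝ) :
    Integrable fun s : ℝ => exp (s * x - s ^ 2 / (4 * t)) := by
  simp_rw [mul_sub_sq_div_eq ht.ne', exp_add]
  exact ((integrable_exp_neg_mul_sq (by positivity)).comp_sub_right _).const_mul _

lemma integral_exp_mul_sub_sq_div (ht : 0 < t) (x : ℝ) :
    ∫ s, exp (s * x - s ^ 2 / (4 * t)) = exp (t * x ^ 2) * √(4 * π * t) := by
  simp_rw [mul_sub_sq_div_eq ht.ne', exp_add]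
  rw [integral_const_mul, integral_sub_right_eq_self (fun s ↦ exp (-(1 / (4 * t)) * s ^ 2)),
    integral_gaussian]
  congr 2
  field_simp

variable {Ω : Type*} [MeasurableSpace Ω] {μ : Measure Ω} {X : Ω → ℝ}

lemma lintegral_exp_mul_sq_mul_sqrt [SFinite μ] (hX : Measurable X) (ht : 0 < t) :
    (∫⁻ ω, ENNReal.ofReal (exp (t * X ω ^ 2)) ∂μ) * ENNReal.ofReal √(4 * π * t) =
      ∫⁻ s, (∫⁻ ω, ENNReal.ofReal (exp (s * X ω)) ∂μ) *
        ENNReal.ofReal (exp (-(s ^ 2 / (4 * t)))) := by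
  calc _ = ∫⁻ ω, ∫⁻ s, ENNReal.ofReal (exp (s * X ω - s ^ 2 / (4 * t))) ∂volume ∂μ := by
          rw [← lintegral_mul_const _ (by fun_prop)]
          congr with ω
          rw [← ENNReal.ofReal_mul (exp_nonneg _), ← integral_exp_mul_sub_sq_div ht,
            ofReal_integral_eq_lintegral_ofReal (integrable_exp_mul_sub_sq_div ht _)
              (ae_of_all _ fun _ ↦ (exp_pos _).le)]
    _ = ∫⁻ s, ∫⁻ ω, ENNReal.ofReal (exp (s * X ω - s ^ 2 / (4 * t))) ∂μ ∂volume :=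
          lintegral_lintegral_swap (by fun_prop)
    _ = _ := by
          congr with s
          rw [← lintegral_mul_const _ (by fun_prop)]
          simp_rw [← ENNReal.ofReal_mul (exp_nonneg _), ← exp_add, sub_eq_add_neg]

lemma lintegral_exp_mul_sq_le [SFinite μ] (hX : Measurable X) {v : ℝ} (ht : 0 < t)
    (hvt : 2 * v * t < 1)
    (hmgf : ∀ s, ∫⁻ ω, ENNReal.ofReal (exp (s * X ω)) ∂μ ≤ ENNReal.ofReal (exp (s ^ 2 * v / 2))) :
    ∫⁻ ω, ENNReal.ofReal (exp (t * X ω ^ 2)) ∂μ ≤ ENNReal.ofReal (√(1 - 2 * v * t))⁻¹ := by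
  set a := 1 / (4 * t) - v / 2 with ha_def
  have h4ta : 4 * t * a = 1 - 2 * v * t := by
    rw [ha_def]
    field_simp
    ring
  have ha : 0 < a := pos_of_mul_pos_right (by linarith : 0 < 4 * t * a) (by positivity)
  have hc : 0 < √(4 * π * t) := by positivity
  have hgauss : √(π / a) = (√(1 - 2 * v * t))⁻¹ * √(4 * π * t) := by
    rw [← sqrt_inv, ← sqrt_mul (by positivity), ← h4ta]
    field_simp
  refine (ENNReal.mul_le_mul_iff_left (ENNReal.ofReal_pos.mpr hc).ne' ENNReal.ofReal_ne_top).mp ?_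
  calc _ = ∫⁻ s, (∫⁻ ω, ENNReal.ofReal (exp (s * X ω)) ∂μ) *
        ENNReal.ofReal (exp (-(s ^ 2 / (4 * t)))) := lintegral_exp_mul_sq_mul_sqrt hX ht
    _ ≤ ∫⁻ s, ENNReal.ofReal (exp (-a * s ^ 2)) := by
          refine lintegral_mono fun s ↦ (mul_le_mul_left (hmgf s) _).trans_eq ?_
          rw [← ENNReal.ofReal_mul (exp_nonneg _), ← exp_add, ha_def]
          ring_nf
    _ = ENNReal.ofReal (√(1 - 2 * v * t))⁻¹ * ENNReal.ofReal √(4 * π * t) := by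
          rw [← ofReal_integral_eq_lintegral_ofReal (integrable_exp_neg_mul_sq ha)
            (ae_of_all _ fun _ ↦ (exp_pos _).le), integral_gaussian, hgauss,
            ENNReal.ofReal_mul (by positivity)]

lemma integrable_exp_mul_of_integrable_exp_mul_sq (hX : AEMeasurable X μ) (ht : 0 < t)
    (hint : Integrable (fun ω ↦ exp (t * X ω ^ 2)) μ) (s : ℝ) :
    Integrable (fun ω ↦ exp (s * X ω)) μ := by
  refine (hint.const_mul (exp (s ^ 2 / (4 * t)))).mono' (by fun_prop) (ae_of_all _ fun ω ↦ ?_)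
  rw [norm_of_nonneg (exp_pos _).le, ← exp_add]
  exact exp_le_exp.mpr (mul_le_sq_div_add_mul_sq ht _ _)

lemma integral_exp_mul_sq_le [SFinite μ] (hX : Measurable X) {v : ℝ} (ht : 0 < t)
    (hvt : 2 * v * t < 1) (hmgf : ∀ s, ∫ ω, exp (s * X ω) ∂μ ≤ exp (s ^ 2 * v / 2)) :
    ∫ ω, exp (t * X ω ^ 2) ∂μ ≤ (√(1 - 2 * v * t))⁻¹ := by
  by_cases hint : Integrable (fun ω ↦ exp (t * X ω ^ 2)) μ
  swap
  · rw [integral_undef hint]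
    positivity
  have hmgf' (s : ℝ) :
      ∫⁻ ω, ENNReal.ofReal (exp (s * X ω)) ∂μ ≤ ENNReal.ofReal (exp (s ^ 2 * v / 2)) := by
    rw [← ofReal_integral_eq_lintegral_ofReal
      (integrable_exp_mul_of_integrable_exp_mul_sq hX.aemeasurable ht hint s)
      (ae_of_all _ fun _ ↦ (exp_pos _).le)]
    exact ENNReal.ofReal_le_ofReal (hmgf s)
  have := lintegral_exp_mul_sq_le hX ht hvt hmgf'
  rw [← ofReal_integral_eq_lintegral_ofReal hint (ae_of_all _ fun _ ↦ (exp_pos _).le)] at this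
  exact (ENNReal.ofReal_le_ofReal_iff (by positivity)).mp this

end HubbardStratonovich

lemma neg_log_one_sub_le {u : ℝ} (h0 : 0 ≤ u) (h1 : u < 1) :
    -log (1 - u) ≤ u + u ^ 2 / (2 * (1 - u)) := by
  have hv : 0 < 1 - u := by linarith
  set w := u ^ 2 / (2 * (1 - u)) with hw_def
  have hw : w * (2 * (1 - u)) = u ^ 2 := by
    rw [hw_def]
    field_simp
  have hw0 : 0 ≤ w := by positivity
  rw [← log_inv, log_le_iff_le_exp (by positivity)]
  refine le_trans ?_ (quadratic_le_exp_of_nonneg (by positivity))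
  rw [inv_le_iff_one_le_mul₀ hv]
  nlinarith [mul_nonneg h0 hw0, mul_nonneg (mul_nonneg h0 hw0) hv.le, sq_nonneg w,
    mul_nonneg hv.le (sq_nonneg w)]

lemma inv_sqrt_one_sub_le_exp {u : ℝ} (h0 : 0 ≤ u) (h1 : u < 1) :
    (√(1 - u))⁻¹ ≤ exp (u / 2 + u ^ 2 / (4 * (1 - u))) := by
  have hv : 0 < 1 - u := by linarith
  have hhalf : u ^ 2 / (4 * (1 - u)) = u ^ 2 / (2 * (1 - u)) / 2 := by
    field_simp
    ring
  rw [← exp_log (sqrt_pos.mpr hv), log_sqrt hv.le, ← exp_neg, exp_le_exp, hhalf]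
  linarith [neg_log_one_sub_le h0 h1]

theorem stmt6_general {Ω : Type*} [MeasurableSpace Ω] (μ : Measure Ω) [IsProbabilityMeasure μ]
    (X : Ω → ℝ) (hX : Measurable X) (σX : ℝ)
    (hsub : ∀ s : ℝ, ∫ ω, Real.exp (s * X ω) ∂μ ≤ Real.exp (s ^ 2 * σX ^ 2 / 2)) :
    ∀ t : ℝ, 0 < t → t < 1 / (2 * σX ^ 2) →
      ∫ ω, Real.exp (t * (X ω ^ 2 - σX ^ 2)) ∂μ ≤
        Real.exp (σX ^ 4 * t ^ 2 / (1 - 2 * σX ^ 2 * t)) := by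
  intro t ht0 ht1
  have hu : 2 * σX ^ 2 * t < 1 := by
    rcases (sq_nonneg σX).eq_or_lt with h | h
    · simp [← h]
    · rwa [lt_div_iff₀ (by positivity), mul_comm] at ht1
  have hcenter (ω : Ω) :
      exp (t * (X ω ^ 2 - σX ^ 2)) = exp (-(t * σX ^ 2)) * exp (t * X ω ^ 2) := by
    rw [← exp_add]
    ring_nf
  calc ∫ ω, exp (t * (X ω ^ 2 - σX ^ 2)) ∂μ
      = exp (-(t * σX ^ 2)) * ∫ ω, exp (t * X ω ^ 2) ∂μ := by
        simp_rw [hcenter]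
        exact integral_const_mul _ _
    _ ≤ exp (-(t * σX ^ 2)) * (√(1 - 2 * σX ^ 2 * t))⁻¹ := by
        gcongr
        exact integral_exp_mul_sq_le hX ht0 hu hsub
    _ ≤ exp (-(t * σX ^ 2)) *
          exp (2 * σX ^ 2 * t / 2 + (2 * σX ^ 2 * t) ^ 2 / (4 * (1 - 2 * σX ^ 2 * t))) := by
        gcongr
        exact inv_sqrt_one_sub_le_exp (by positivity) hu
    _ = exp (σX ^ 4 * t ^ 2 / (1 - 2 * σX ^ 2 * t)) := by
        rw [← exp_add]
        congr 1
        field_simp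
        ring

/-- Strictly subgaussian right-tail bound: for mean-zero `X` with variance `σ_X²`
satisfying `E[exp(sX)] ≤ exp(s²σ_X²/2)` for all `s`, for `0 < t < 1/(2σ_X²)`,
`E[exp(t(X² − σ_X²))] ≤ exp(σ_X⁴ t² / (1 − 2σ_X² t))`. -/
theorem stmt6 {Ω : Type*} [MeasurableSpace Ω] (μ : Measure Ω) [IsProbabilityMeasure μ]
    (X : Ω → ℝ) (hX : Measurable X) (σX : ℝ) (hσX : 0 < σX)
    (hmean : ∫ ω, X ω ∂μ = 0)
    (hvar : variance X μ = σX ^ 2)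
    (hsub : ∀ s : ℝ, ∫ ω, Real.exp (s * X ω) ∂μ ≤ Real.exp (s ^ 2 * σX ^ 2 / 2)) :
    ∀ t : ℝ, 0 < t → t < 1 / (2 * σX ^ 2) →
      ∫ ω, Real.exp (t * (X ω ^ 2 - σX ^ 2)) ∂μ ≤
        Real.exp (σX ^ 4 * t ^ 2 / (1 - 2 * σX ^ 2 * t)) :=
  stmt6_general μ X hX σX hsub
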